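/- Let λ ∈ Λ. (1) Let m ≥ 1 and let z₀, z₁ ∈ ℂ_p with |z₀| = |z₁| = ρ_m; if |z₀ − z₁| ≤ S, then |P_λ(z₀) − P_λ(z₁)| ≤ ρ_{m−1}·|z₀ − z₁|. (2) If z₀, z₁ ∈ {z : |z − 1| < 1}, then |P_λ(z₀) − P_λ(z₁)| = p·|z₀ − z₁|. -/
import Mathlib


open Filter Metric

/-- The polynomial family `P_λ(z) = (λ/p)·z^p + (1 − λ/p)·z^{p+1}`. -/
noncomputable def Pfam {K : Type*} [NontriviallyNormedField K] (p : ℕ) (lam z : K) : K :=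
  lam / (p : K) * z ^ p + (1 - lam / (p : K)) * z ^ (p + 1)

section Aux

variable {K : Type*} [NontriviallyNormedField K]

/-- Algebraic identity for the difference of `Pfam`. -/
lemma Pfam_sub_eq (p : ℕ) (lam z₀ z₁ : K) :
    Pfam p lam z₀ - Pfam p lam z₁ =
      (z₀ ^ p - z₁ ^ p) * (lam / (p : K) + (1 - lam / (p : K)) * z₀)
        + (1 - lam / (p : K)) * z₁ ^ p * (z₀ - z₁) := by
  unfold Pfam
  ring

/-- Binomial expansion of `z₀^p - z₁^p` in powers of `d = z₀ - z₁`. -/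
lemma pow_sub_pow_expand (p : ℕ) (z₀ z₁ : K) :
    z₀ ^ p - z₁ ^ p =
      ∑ k ∈ Finset.range p,
        (p.choose (k + 1) : K) * (z₀ - z₁) ^ (k + 1) * z₁ ^ (p - (k + 1)) := by
  have h : z₀ = (z₀ - z₁) + z₁ := by ring
  calc z₀ ^ p - z₁ ^ p = ((z₀ - z₁) + z₁) ^ p - z₁ ^ p := by rw [← h]
    _ = (∑ k ∈ Finset.range (p + 1),
          (z₀ - z₁) ^ k * z₁ ^ (p - k) * (p.choose k : K)) - z₁ ^ p := by rw [add_pow]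
    _ = ((∑ k ∈ Finset.range p,
          (z₀ - z₁) ^ (k + 1) * z₁ ^ (p - (k + 1)) * (p.choose (k + 1) : K))
          + (z₀ - z₁) ^ 0 * z₁ ^ (p - 0) * (p.choose 0 : K)) - z₁ ^ p := by
        rw [Finset.sum_range_succ']
    _ = ∑ k ∈ Finset.range p,
          (z₀ - z₁) ^ (k + 1) * z₁ ^ (p - (k + 1)) * (p.choose (k + 1) : K) := by
        simp
    _ = _ := Finset.sum_congr rfl fun k _ => by ring

variable [IsUltrametricDist K]

/-- Ultrametric: if `‖y‖ < ‖x‖` then `‖x + y‖ = ‖x‖`. -/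
lemma norm_add_eq_left' {x y : K} (h : ‖y‖ < ‖x‖) : ‖x + y‖ = ‖x‖ := by
  refine le_antisymm ((IsUltrametricDist.norm_add_le_max x y).trans (max_le le_rfl h.le)) ?_
  by_contra hc
  push_neg at hc
  have hxy : x = (x + y) + (-y) := by ring
  have h2 : ‖x‖ ≤ max ‖x + y‖ ‖y‖ := by
    calc ‖x‖ = ‖(x + y) + (-y)‖ := by rw [← hxy]
      _ ≤ max ‖x + y‖ ‖-y‖ := IsUltrametricDist.norm_add_le_max _ _
      _ = max ‖x + y‖ ‖y‖ := by rw [norm_neg]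
  have := max_lt hc h
  linarith [le_trans h2 this.le]

end Aux

/-- Local behaviour of `P_λ` on spheres `{|z| = ρ_m}` and on the ball `{|z − 1| < 1}`:
(1) if `|z₀| = |z₁| = ρ_m` and `|z₀ − z₁| ≤ S` then `|P_λ(z₀) − P_λ(z₁)| ≤ ρ_{m−1}·|z₀ − z₁|`;
(2) if `|z₀ − 1| < 1` and `|z₁ − 1| < 1` then `|P_λ(z₀) − P_λ(z₁)| = p·|z₀ − z₁|`.
Here `S > 0` satisfies `p·S^{p−1} = ρ = p^{-1/(p-1)}`, and `ρ_0 = 1`, `p·ρ_n^p = ρ_{n−1}`.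
`K` plays the role of `ℂ_p`. -/
theorem statement5 (p : ℕ) (hp : p.Prime)
    {K : Type*} [NontriviallyNormedField K] [IsAlgClosed K] [CompleteSpace K]
    [IsUltrametricDist K] [CharZero K]
    (hpnorm : ‖(p : K)‖ = (p : ℝ)⁻¹)
    (S : ℝ) (hS : 0 < S) (hSdef : (p : ℝ) * S ^ (p - 1) = (p : ℝ) ^ (-(1:ℝ) / ((p : ℝ) - 1)))
    (ρseq : ℕ → ℝ) (hρ0 : ρseq 0 = 1) (hρpos : ∀ n, 0 < ρseq n)
    (hρrec : ∀ n : ℕ, (p : ℝ) * ρseq (n + 1) ^ p = ρseq n)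
    (lam : K) (hlam : ‖lam - 1‖ < 1) :
    (∀ m : ℕ, 1 ≤ m → ∀ z₀ z₁ : K, ‖z₀‖ = ρseq m → ‖z₁‖ = ρseq m → ‖z₀ - z₁‖ ≤ S →
      ‖Pfam p lam z₀ - Pfam p lam z₁‖ ≤ ρseq (m - 1) * ‖z₀ - z₁‖) ∧
    (∀ z₀ z₁ : K, ‖z₀ - 1‖ < 1 → ‖z₁ - 1‖ < 1 →
      ‖Pfam p lam z₀ - Pfam p lam z₁‖ = (p : ℝ) * ‖z₀ - z₁‖) := by
  have hp2 : 2 ≤ p := hp.two_le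
  have hpR : (2 : ℝ) ≤ (p : ℝ) := by exact_mod_cast hp2
  have hpR1 : (1 : ℝ) < (p : ℝ) := by linarith
  have hpRpos : (0 : ℝ) < (p : ℝ) := by linarith
  have hpinv_lt : (p : ℝ)⁻¹ < 1 := by
    rw [inv_lt_one_iff₀]; right; exact hpR1
  have hpinv_pos : (0 : ℝ) < (p : ℝ)⁻¹ := by positivity
  have hpm1ne : p - 1 ≠ 0 := by omega
  -- The limit radius r = p^(-1/(p-1))
  set r : ℝ := (p : ℝ) ^ (-(1:ℝ) / ((p : ℝ) - 1)) with hr_def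
  have hp1R : (0 : ℝ) < (p : ℝ) - 1 := by linarith
  have hr_pos : 0 < r := Real.rpow_pos_of_pos hpRpos _
  have hcast_sub : ((p - 1 : ℕ) : ℝ) = (p : ℝ) - 1 := by
    have h1 : 1 ≤ p := hp.one_lt.le
    push_cast [h1]; ring
  have hr_pow : r ^ (p - 1) = (p : ℝ)⁻¹ := by
    rw [hr_def, ← Real.rpow_natCast ((p:ℝ) ^ (-(1:ℝ) / ((p : ℝ) - 1))) (p-1),
      ← Real.rpow_mul hpRpos.le, hcast_sub,
      div_mul_cancel₀ _ (by linarith : (p:ℝ) - 1 ≠ 0)]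
    exact Real.rpow_neg_one _
  have hr_le_one : r ≤ 1 := by
    apply Real.rpow_le_one_of_one_le_of_nonpos hpR1.le
    apply div_nonpos_of_nonpos_of_nonneg <;> linarith
  have hr_ge : (p : ℝ)⁻¹ ≤ r := by
    rw [hr_def, ← Real.rpow_neg_one (p : ℝ)]
    apply Real.rpow_le_rpow_of_exponent_le hpR1.le
    rw [neg_div, neg_le_neg_iff, div_le_one hp1R]
    linarith
  have hr_pow_p : r ^ p = r * (p : ℝ)⁻¹ := by
    have h1 : r ^ p = r ^ (p - 1) * r := by
      rw [← pow_succ]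
      congr 1
      omega
    rw [h1, hr_pow]
    ring
  -- S ≤ r
  have hS_pow : S ^ (p - 1) = r * (p : ℝ)⁻¹ := by
    field_simp
    linarith [hSdef]
  have hS_le_r : S ≤ r := by
    have h1 : S ^ (p - 1) ≤ r ^ (p - 1) := by
      rw [hS_pow, ← hr_pow]
      nlinarith [pow_pos hr_pos (p-1)]
    exact (pow_le_pow_iff_left₀ hS.le hr_pos.le hpm1ne).mp h1
  -- ρseq bounds
  have hρ_le_one : ∀ n, ρseq n ≤ 1 := by
    intro n
    induction n with
    | zero => rw [hρ0]
    | succ n ih =>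
      by_contra hc
      push_neg at hc
      have h1 : 1 < ρseq (n+1) ^ p := one_lt_pow₀ hc hp.ne_zero
      clear hρ0
      have h2 := hρrec n
      nlinarith
  have hρ_ge_r : ∀ n, r ≤ ρseq n := by
    intro n
    induction n with
    | zero => rw [hρ0]; exact hr_le_one
    | succ n ih =>
      have h1 : r ^ p ≤ ρseq (n+1) ^ p := by
        rw [hr_pow_p]
        have h3 : r ≤ (p : ℝ) * ρseq (n+1) ^ p := by rw [hρrec n]; exact ih
        calc r * (p : ℝ)⁻¹ ≤ ((p : ℝ) * ρseq (n+1) ^ p) * (p : ℝ)⁻¹ := by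
              exact mul_le_mul_of_nonneg_right h3 hpinv_pos.le
          _ = ρseq (n+1) ^ p := by
              field_simp
      exact (pow_le_pow_iff_left₀ hr_pos.le (hρpos _).le hp.ne_zero).mp h1
  -- norms in K
  have hpKne : ((p : K)) ≠ 0 := by exact_mod_cast hp.ne_zero
  have hlam_norm : ‖lam‖ = 1 := by
    have h1 : ‖(1 : K) + (lam - 1)‖ = ‖(1 : K)‖ := by
      apply norm_add_eq_left'
      simpa using hlam
    simpa using h1
  have hlamp : ‖lam / (p : K)‖ = (p : ℝ) := by
    rw [norm_div, hlam_norm, hpnorm, one_div, inv_inv]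
  have h1mlamp : ‖1 - lam / (p : K)‖ = (p : ℝ) := by
    have h1 : ‖-(lam / (p : K)) + 1‖ = ‖-(lam / (p : K))‖ := by
      apply norm_add_eq_left'
      rw [norm_neg, hlamp, norm_one]
      exact hpR1
    rw [norm_neg, hlamp] at h1
    rw [← h1]
    congr 1
    ring
  -- norm of binomial coefficients
  have hchoose : ∀ k : ℕ, k + 1 < p → ‖((p.choose (k+1) : K))‖ ≤ (p : ℝ)⁻¹ := by
    intro k hk
    obtain ⟨t, ht⟩ := hp.dvd_choose_self (Nat.succ_ne_zero k) hk
    rw [ht]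
    push_cast
    rw [norm_mul, hpnorm]
    calc (p : ℝ)⁻¹ * ‖(t : K)‖ ≤ (p : ℝ)⁻¹ * 1 := by
          exact mul_le_mul_of_nonneg_left (IsUltrametricDist.norm_natCast_le_one K t) hpinv_pos.le
      _ = (p : ℝ)⁻¹ := mul_one _
  constructor
  · -- Part 1
    intro m hm z₀ z₁ hz₀ hz₁ hd
    obtain ⟨n, rfl⟩ : ∃ n, m = n + 1 := ⟨m - 1, by omega⟩
    set ρ := ρseq (n + 1) with hρdef
    have hρpos' : 0 < ρ := hρpos _
    have hρ1 : ρ ≤ 1 := hρ_le_one _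
    have hρr : r ≤ ρ := hρ_ge_r _
    have hρinv : (p : ℝ)⁻¹ ≤ ρ := le_trans hr_ge hρr
    have hdnn : 0 ≤ ‖z₀ - z₁‖ := norm_nonneg _
    -- bound on each binomial term
    have hterm : ∀ k ∈ Finset.range p,
        ‖(p.choose (k + 1) : K) * (z₀ - z₁) ^ (k + 1) * z₁ ^ (p - (k + 1))‖
          ≤ ρ ^ p * ‖z₀ - z₁‖ := by
      intro k hk
      rw [Finset.mem_range] at hk
      rw [norm_mul, norm_mul, norm_pow, norm_pow, hz₁]
      rcases eq_or_lt_of_le (Nat.succ_le_of_lt hk) with hkp | hkp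
      · -- k + 1 = p
        have hkp' : k + 1 = p := hkp
        have hch : (p.choose (k+1) : K) = 1 := by rw [hkp']; simp
        rw [hch, norm_one, one_mul]
        have hpk : p - (k + 1) = 0 := by omega
        rw [hpk, pow_zero, mul_one]
        have h1 : ‖z₀ - z₁‖ ^ (k + 1) = ‖z₀ - z₁‖ ^ k * ‖z₀ - z₁‖ := pow_succ _ _
        rw [h1]
        have h2 : ‖z₀ - z₁‖ ^ k ≤ S ^ k := pow_le_pow_left₀ hdnn hd k
        have h3 : S ^ k = r ^ p := by
          rw [show k = p - 1 by omega, hS_pow, hr_pow_p]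
        have h4 : r ^ p ≤ ρ ^ p := pow_le_pow_left₀ hr_pos.le hρr p
        have h5 : ‖z₀ - z₁‖ ^ k ≤ ρ ^ p := by
          rw [← h3] at h4
          exact le_trans h2 h4
        exact mul_le_mul_of_nonneg_right h5 hdnn
      · -- k + 1 < p
        have hch := hchoose k hkp
        have h1 : ‖z₀ - z₁‖ ^ (k + 1) ≤ ρ ^ k * ‖z₀ - z₁‖ := by
          rw [pow_succ]
          have h2 : ‖z₀ - z₁‖ ^ k ≤ ρ ^ k :=
            pow_le_pow_left₀ hdnn (le_trans hd (le_trans hS_le_r hρr)) k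
          exact mul_le_mul_of_nonneg_right h2 hdnn
        calc ‖(p.choose (k+1) : K)‖ * ‖z₀ - z₁‖ ^ (k + 1) * ρ ^ (p - (k + 1))
            ≤ (p : ℝ)⁻¹ * (ρ ^ k * ‖z₀ - z₁‖) * ρ ^ (p - (k + 1)) := by
              apply mul_le_mul_of_nonneg_right _ (pow_nonneg hρpos'.le _)
              apply mul_le_mul hch h1 (pow_nonneg hdnn _) hpinv_pos.le
          _ = (p : ℝ)⁻¹ * ρ ^ (p - 1) * ‖z₀ - z₁‖ := by
              rw [show (p : ℝ)⁻¹ * (ρ ^ k * ‖z₀ - z₁‖) * ρ ^ (p - (k + 1))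
                = (p : ℝ)⁻¹ * (ρ ^ k * ρ ^ (p - (k+1))) * ‖z₀ - z₁‖ by ring, ← pow_add]
              congr 3
              omega
          _ ≤ ρ * ρ ^ (p - 1) * ‖z₀ - z₁‖ := by
              apply mul_le_mul_of_nonneg_right _ hdnn
              exact mul_le_mul_of_nonneg_right hρinv (pow_nonneg hρpos'.le _)
          _ = ρ ^ p * ‖z₀ - z₁‖ := by
              rw [← pow_succ']
              congr 2
              omega
    have hA : ‖z₀ ^ p - z₁ ^ p‖ ≤ ρ ^ p * ‖z₀ - z₁‖ := by
      rw [pow_sub_pow_expand]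
      exact IsUltrametricDist.norm_sum_le_of_forall_le_of_nonneg
        (by positivity) hterm
    have hC : ‖lam / (p : K) + (1 - lam / (p : K)) * z₀‖ ≤ (p : ℝ) := by
      refine (IsUltrametricDist.norm_add_le_max _ _).trans (max_le (le_of_eq hlamp) ?_)
      rw [norm_mul, h1mlamp, hz₀]
      exact mul_le_of_le_one_right hpRpos.le hρ1
    have hrec := hρrec n
    have hgoal : ρseq (n + 1 - 1) = (p : ℝ) * ρ ^ p := by
      rw [show n + 1 - 1 = n from rfl]
      exact hrec.symm
    rw [Pfam_sub_eq, hgoal]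
    refine (IsUltrametricDist.norm_add_le_max _ _).trans (max_le ?_ ?_)
    · rw [norm_mul]
      calc ‖z₀ ^ p - z₁ ^ p‖ * ‖lam / (p : K) + (1 - lam / (p : K)) * z₀‖
          ≤ (ρ ^ p * ‖z₀ - z₁‖) * (p : ℝ) := by
            apply mul_le_mul hA hC (norm_nonneg _) (by positivity)
        _ = (p : ℝ) * ρ ^ p * ‖z₀ - z₁‖ := by ring
    · rw [norm_mul, norm_mul, norm_pow, h1mlamp, hz₁]
  · -- Part 2
    intro z₀ z₁ h₀ h₁
    rcases eq_or_ne z₀ z₁ with rfl | hne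
    · simp
    have hd0 : z₀ - z₁ ≠ 0 := sub_ne_zero_of_ne hne
    have hdpos : 0 < ‖z₀ - z₁‖ := norm_pos_iff.mpr hd0
    have hz₀n : ‖z₀‖ ≤ 1 := by
      have : z₀ = 1 + (z₀ - 1) := by ring
      rw [this]
      exact (IsUltrametricDist.norm_add_le_max _ _).trans (max_le (by simp) (by simpa using h₀.le))
    have hz₁n : ‖z₁‖ = 1 := by
      have h1 : ‖(1 : K) + (z₁ - 1)‖ = ‖(1 : K)‖ := norm_add_eq_left' (by simpa using h₁)
      simpa using h1
    have hdlt : ‖z₀ - z₁‖ < 1 := by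
      have : z₀ - z₁ = (z₀ - 1) + (-(z₁ - 1)) := by ring
      rw [this]
      refine lt_of_le_of_lt (IsUltrametricDist.norm_add_le_max _ _) ?_
      rw [norm_neg]
      exact max_lt h₀ h₁
    set d := ‖z₀ - z₁‖ with hd_def
    set M : ℝ := max (d ^ (p - 1)) (p : ℝ)⁻¹ with hM_def
    have hM_pos : 0 < M := lt_of_lt_of_le hpinv_pos (le_max_right _ _)
    have hM_lt1 : M < 1 := max_lt (pow_lt_one₀ hdpos.le hdlt hpm1ne) hpinv_lt
    -- bound each binomial term by M * d
    have hterm : ∀ k ∈ Finset.range p,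
        ‖(p.choose (k + 1) : K) * (z₀ - z₁) ^ (k + 1) * z₁ ^ (p - (k + 1))‖
          ≤ M * d := by
      intro k hk
      rw [Finset.mem_range] at hk
      rw [norm_mul, norm_mul, norm_pow, norm_pow, hz₁n, one_pow, mul_one]
      rcases eq_or_lt_of_le (Nat.succ_le_of_lt hk) with hkp | hkp
      · have hkp' : k + 1 = p := hkp
        have hch : (p.choose (k+1) : K) = 1 := by rw [hkp']; simp
        rw [hch, norm_one, one_mul, hkp']
        have h1 : d ^ p = d ^ (p - 1) * d := by
          rw [← pow_succ]
          congr 1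
          omega
        rw [h1]
        exact mul_le_mul_of_nonneg_right (le_max_left _ _) hdpos.le
      · have hch := hchoose k hkp
        have h1 : d ^ (k + 1) ≤ d := by
          calc d ^ (k + 1) ≤ d ^ 1 := pow_le_pow_of_le_one hdpos.le hdlt.le (by omega)
            _ = d := pow_one d
        calc ‖(p.choose (k+1) : K)‖ * d ^ (k + 1) ≤ (p : ℝ)⁻¹ * d :=
              mul_le_mul hch h1 (pow_nonneg hdpos.le _) hpinv_pos.le
          _ ≤ M * d := mul_le_mul_of_nonneg_right (le_max_right _ _) hdpos.le
    have hA : ‖z₀ ^ p - z₁ ^ p‖ ≤ M * d := by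
      rw [pow_sub_pow_expand]
      exact IsUltrametricDist.norm_sum_le_of_forall_le_of_nonneg
        (by positivity) hterm
    -- coefficient bound
    set N : ℝ := max 1 ((p : ℝ) * ‖z₀ - 1‖) with hN_def
    have hN_pos : 0 < N := lt_of_lt_of_le one_pos (le_max_left _ _)
    have hN_lt : N < (p : ℝ) := max_lt hpR1 (mul_lt_of_lt_one_right hpRpos h₀)
    have hC : ‖lam / (p : K) + (1 - lam / (p : K)) * z₀‖ ≤ N := by
      have hrw : lam / (p : K) + (1 - lam / (p : K)) * z₀
          = z₀ + (lam / (p : K)) * (1 - z₀) := by ring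
      rw [hrw]
      refine (IsUltrametricDist.norm_add_le_max _ _).trans (max_le ?_ ?_)
      · exact le_trans hz₀n (le_max_left _ _)
      · rw [norm_mul, hlamp, norm_sub_rev]
        exact le_max_right _ _
    -- the main term has norm p * d, the other is strictly smaller
    have hmain : ‖(1 - lam / (p : K)) * z₁ ^ p * (z₀ - z₁)‖ = (p : ℝ) * d := by
      rw [norm_mul, norm_mul, norm_pow, h1mlamp, hz₁n, one_pow, mul_one]
    have hsmall : ‖(z₀ ^ p - z₁ ^ p) * (lam / (p : K) + (1 - lam / (p : K)) * z₀)‖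
        < (p : ℝ) * d := by
      rw [norm_mul]
      calc ‖z₀ ^ p - z₁ ^ p‖ * ‖lam / (p : K) + (1 - lam / (p : K)) * z₀‖
          ≤ (M * d) * N := by
            apply mul_le_mul hA hC (norm_nonneg _) (mul_pos hM_pos hdpos).le
        _ < (p : ℝ) * d := by
            have h1 : (M * d) * N ≤ (M * d) * (p : ℝ) :=
              mul_le_mul_of_nonneg_left hN_lt.le (mul_pos hM_pos hdpos).le
            have h2 : M * d < 1 * d := mul_lt_mul_of_pos_right hM_lt1 hdpos
            have h3 : (M * d) * (p : ℝ) < d * (p : ℝ) :=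
              mul_lt_mul_of_pos_right (by linarith) hpRpos
            have h4 : d * (p : ℝ) = (p : ℝ) * d := mul_comm _ _
            linarith
    rw [Pfam_sub_eq, add_comm, norm_add_eq_left' (by rw [hmain]; exact hsmall), hmain]
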